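/- A finite subset S of the positive integers is the β-set of an (n, dn+1)-core partition with distinct parts if and only if: (i) S ⊆ {(i-1)n + j : 1 ≤ i ≤ d, 1 ≤ j ≤ n-1}; (ii) if in + j ∈ S with 1 ≤ i ≤ d-1 and 1 ≤ j ≤ n-1, then (i-1)n + j ∈ S; and (iii) if j ∈ S with 1 ≤ j ≤ n-2, then j+1 ∉ S. -/

import Mathlib

def hook (Y : YoungDiagram) (i j : ℕ) : ℕ :=
  (Y.rowLen i - j) + (Y.colLen j - i) - 1

def IsCore (Y : YoungDiagram) (t : ℕ) : Prop :=
  ∀ c ∈ Y.cells, ¬ (t ∣ hook Y c.1 c.2)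

def DistinctParts (Y : YoungDiagram) : Prop :=
  ∀ i : ℕ, 0 < Y.rowLen (i + 1) → Y.rowLen (i + 1) < Y.rowLen i

def betaSet (Y : YoungDiagram) : Finset ℕ :=
  (Finset.range (Y.colLen 0)).image (fun i => Y.rowLen i + (Y.colLen 0 - 1 - i))

/-
With `ℓ` rows numbered from `0`, row `i` has β-number `b i = λ_i + (ℓ - 1 - i)`, and the numbers
`g j = j + #{rows of length ≤ j}`, one for each column, are exactly the remaining natural numbers;
the hook of the cell `(i, j)` is `b i - g j`. So a partition is a `t`-core iff its β-set is closed
under subtracting `t`, and it has distinct parts iff its β-set has no two consecutive elements.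
Every finite set avoiding `0` is a β-set: stack rows on top, one for each new largest element.

For a set closed under subtracting `n` and `dn + 1` with no two consecutive elements, an element
`x ≥ dn` would put both `x - dn - 1` and `x - dn` in the set; so all elements are below `dn` and not
multiples of `n`. Closure under `n` is then (ii), and reducing `x` and `x + 1` modulo `n` shows that
(iii) excludes consecutive elements.
-/

theorem StrictMono.exists_apply_le_lt_apply_succ {f : ℕ → ℕ} (hf : StrictMono f) {y : ℕ}
    (hy : f 0 ≤ y) : ∃ j, f j ≤ y ∧ y < f (j + 1) := by
  induction y, hy using Nat.le_induction with
  | base => exact ⟨0, le_rfl, hf (Nat.lt_succ_self 0)⟩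
  | succ y _ ih =>
    obtain ⟨j, hjy, hyj⟩ := ih
    rcases (Nat.add_one_le_of_lt hyj).lt_or_eq with h | h
    · exact ⟨j, by omega, h⟩
    · exact ⟨j + 1, h.ge, by rw [h]; exact hf (Nat.lt_succ_self _)⟩

def ClosedUnderSub (t : ℕ) (S : Finset ℕ) : Prop :=
  ∀ x ∈ S, t ≤ x → x - t ∈ S

theorem ClosedUnderSub.sub_mul_mem {t : ℕ} {S : Finset ℕ} (h : ClosedUnderSub t S) (m : ℕ)
    {x : ℕ} (hx : x ∈ S) (hle : m * t ≤ x) : x - m * t ∈ S := by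
  induction m with
  | zero => simpa using hx
  | succ m ih =>
    rw [Nat.succ_mul] at hle ⊢
    rw [← Nat.sub_sub]
    exact h _ (ih (by omega)) (by omega)

namespace YoungDiagram

variable (Y : YoungDiagram)

def betaNum (i : ℕ) : ℕ := Y.rowLen i + (Y.colLen 0 - 1 - i)

def gapNum (j : ℕ) : ℕ := j + (Y.colLen 0 - Y.colLen j)

variable {Y}

theorem colLen_le_colLen_zero (j : ℕ) : Y.colLen j ≤ Y.colLen 0 :=
  Y.colLen_anti 0 j j.zero_le

theorem lt_colLen_iff_lt_rowLen {i j : ℕ} : i < Y.colLen j ↔ j < Y.rowLen i := by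
  rw [← mem_iff_lt_colLen, mem_iff_lt_rowLen]

theorem lt_colLen_zero_iff {i : ℕ} : i < Y.colLen 0 ↔ 0 < Y.rowLen i :=
  lt_colLen_iff_lt_rowLen

theorem mem_betaSet {x : ℕ} : x ∈ betaSet Y ↔ ∃ i < Y.colLen 0, Y.betaNum i = x := by
  simp only [betaSet, betaNum, Finset.mem_image, Finset.mem_range]

theorem betaNum_add_sub_le {i k : ℕ} (hik : i ≤ k) (hk : k < Y.colLen 0) :
    Y.betaNum k + (k - i) ≤ Y.betaNum i := by
  have := Y.rowLen_anti i k hik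
  unfold betaNum
  omega

theorem gapNum_lt_betaNum {i j : ℕ} (h : j < Y.rowLen i) : Y.gapNum j < Y.betaNum i := by
  have := lt_colLen_iff_lt_rowLen.2 h
  have := colLen_le_colLen_zero (Y := Y) j
  unfold gapNum betaNum
  omega

theorem hook_eq_betaNum_sub_gapNum {i j : ℕ} (h : j < Y.rowLen i) :
    hook Y i j = Y.betaNum i - Y.gapNum j := by
  have := lt_colLen_iff_lt_rowLen.2 h
  have := colLen_le_colLen_zero (Y := Y) j
  unfold hook gapNum betaNum
  omega

theorem betaNum_lt_gapNum {i j : ℕ} (hi : i < Y.colLen 0) (h : Y.rowLen i ≤ j) :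
    Y.betaNum i < Y.gapNum j := by
  have : Y.colLen j ≤ i := not_lt.1 fun h' => (lt_colLen_iff_lt_rowLen.1 h').not_ge h
  have := colLen_le_colLen_zero (Y := Y) j
  unfold betaNum gapNum
  omega

theorem gapNum_notMem_betaSet (j : ℕ) : Y.gapNum j ∉ betaSet Y := by
  rintro hj
  obtain ⟨i, hi, h⟩ := mem_betaSet.1 hj
  rcases lt_or_ge j (Y.rowLen i) with hji | hij
  · exact (gapNum_lt_betaNum hji).ne' h
  · exact (betaNum_lt_gapNum hi hij).ne h

theorem gapNum_strictMono : StrictMono Y.gapNum :=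
  strictMono_nat_of_lt_succ fun j => by
    have := Y.colLen_anti j (j + 1) j.le_succ
    have := colLen_le_colLen_zero (Y := Y) j
    unfold gapNum
    omega

theorem exists_gapNum_eq {y : ℕ} (hy : y ∉ betaSet Y) : ∃ j, Y.gapNum j = y := by
  obtain ⟨j, hjy, hyj⟩ :=
    gapNum_strictMono.exists_apply_le_lt_apply_succ (show Y.gapNum 0 ≤ y by simp [gapNum])
  refine ⟨j, hjy.antisymm (not_lt.1 fun hlt => hy (mem_betaSet.2 ?_))⟩
  -- between two consecutive gaps lie the β-numbers of the rows of length `j + 1`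
  have := colLen_le_colLen_zero (Y := Y) j
  unfold gapNum at hlt hyj
  have hij : j + Y.colLen 0 - y < Y.colLen j := by omega
  have hrow : ¬ j + 1 < Y.rowLen (j + Y.colLen 0 - y) :=
    fun h => (lt_colLen_iff_lt_rowLen.2 h).not_ge (by omega)
  have := lt_colLen_iff_lt_rowLen.1 hij
  exact ⟨j + Y.colLen 0 - y, by omega, by unfold betaNum; omega⟩

theorem exists_hook_eq {i y : ℕ} (hi : i < Y.colLen 0) (hy : y < Y.betaNum i)
    (hyn : y ∉ betaSet Y) : ∃ j < Y.rowLen i, hook Y i j = Y.betaNum i - y := by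
  obtain ⟨j, rfl⟩ := exists_gapNum_eq hyn
  have hj : j < Y.rowLen i := not_le.1 fun h => (betaNum_lt_gapNum hi h).not_gt hy
  exact ⟨j, hj, hook_eq_betaNum_sub_gapNum hj⟩

theorem isCore_iff_closedUnderSub (t : ℕ) : IsCore Y t ↔ ClosedUnderSub t (betaSet Y) := by
  constructor
  · intro hcore x hx htx
    by_contra hxt
    obtain ⟨i, hi, rfl⟩ := mem_betaSet.1 hx
    have hlt : Y.betaNum i - t < Y.betaNum i :=
      (Nat.sub_le _ _).lt_of_ne fun h => hxt (by rwa [h])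
    obtain ⟨j, hj, hhook⟩ := exists_hook_eq hi hlt hxt
    exact hcore (i, j) ((mem_cells _).2 (mem_iff_lt_rowLen.2 hj)) (by rw [hhook, Nat.sub_sub_self htx])
  · rintro hcl ⟨i, j⟩ hc ⟨m, hm⟩
    have hj := mem_iff_lt_rowLen.1 ((mem_cells _).1 hc)
    have hi : i < Y.colLen 0 := lt_colLen_zero_iff.2 (by omega)
    have hlt := gapNum_lt_betaNum hj
    rw [hook_eq_betaNum_sub_gapNum hj, mul_comm] at hm
    have := hcl.sub_mul_mem m (mem_betaSet.2 ⟨i, hi, rfl⟩) (by omega)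
    exact gapNum_notMem_betaSet j (by rwa [show Y.betaNum i - m * t = Y.gapNum j by omega] at this)

theorem distinctParts_iff : DistinctParts Y ↔ ∀ x ∈ betaSet Y, x + 1 ∉ betaSet Y := by
  constructor
  · intro hD x hx hx1
    obtain ⟨k, hk, rfl⟩ := mem_betaSet.1 hx
    obtain ⟨i, hi, hik⟩ := mem_betaSet.1 hx1
    have hlt : i < k := not_le.1 fun h => by have := betaNum_add_sub_le h hi; omega
    have hk' : k = i + 1 := by have := betaNum_add_sub_le hlt.le hk; omega
    subst hk'
    have := hD i (lt_colLen_zero_iff.1 hk)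
    unfold betaNum at hik
    omega
  · intro h i hpos
    have hi1 : i + 1 < Y.colLen 0 := lt_colLen_zero_iff.2 hpos
    have := Y.rowLen_anti i (i + 1) i.le_succ
    by_contra hle
    refine h _ (mem_betaSet.2 ⟨i + 1, hi1, rfl⟩) (mem_betaSet.2 ⟨i, by omega, ?_⟩)
    unfold betaNum
    omega

theorem zero_notMem_betaSet : 0 ∉ betaSet Y := by
  rintro h0
  obtain ⟨i, hi, h⟩ := mem_betaSet.1 h0
  have := lt_colLen_zero_iff.1 hi
  unfold betaNum at h
  omega

theorem exists_rowLen_cons (Y : YoungDiagram) {r : ℕ} (hr : Y.rowLen 0 ≤ r) :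
    ∃ Y' : YoungDiagram, Y'.rowLen 0 = r ∧ ∀ i, Y'.rowLen (i + 1) = Y.rowLen i := by
  have hw : (r :: Y.rowLens).SortedGE := by
    refine List.sortedGE_iff_pairwise.2 (List.pairwise_cons.2 ⟨fun a ha => ?_, ?_⟩)
    · obtain ⟨i, hi, rfl⟩ := List.getElem_of_mem ha
      rw [get_rowLens]
      exact (Y.rowLen_anti 0 i i.zero_le).trans hr
    · exact List.sortedGE_iff_pairwise.1 Y.rowLens_sorted
  refine ⟨ofRowLens _ hw, eq_of_forall_lt_iff fun j => ?_, fun i => eq_of_forall_lt_iff fun j => ?_⟩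
  · rw [← mem_iff_lt_rowLen, mem_ofRowLens]
    simp
  · have hY : (i, j) ∈ ofRowLens Y.rowLens Y.rowLens_sorted ↔ (i, j) ∈ Y := by
      rw [ofRowLens_to_rowLens_eq_self]
    rw [← mem_iff_lt_rowLen, ← mem_iff_lt_rowLen, ← hY, mem_ofRowLens, mem_ofRowLens]
    simp

theorem exists_betaSet_eq_insert (Y : YoungDiagram) {r : ℕ} (hr0 : 0 < r)
    (hr : Y.rowLen 0 ≤ r) :
    ∃ Y' : YoungDiagram, betaSet Y' = insert (r + Y.colLen 0) (betaSet Y) := by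
  obtain ⟨Y', h0, hsucc⟩ := exists_rowLen_cons Y hr
  have hcol : Y'.colLen 0 = Y.colLen 0 + 1 := eq_of_forall_lt_iff fun i => by
    cases i <;> simp [lt_colLen_zero_iff, h0, hsucc, hr0]
  refine ⟨Y', Finset.ext fun x => ?_⟩
  simp only [mem_betaSet, hcol, Finset.mem_insert, Nat.exists_lt_succ_left, betaNum, h0, hsucc]
  grind

theorem exists_betaSet_eq (S : Finset ℕ) (hS : 0 ∉ S) : ∃ Y : YoungDiagram, betaSet Y = S := by
  induction S using Finset.induction_on_max with
  | empty =>
    refine ⟨⊥, Finset.eq_empty_of_forall_notMem fun x hx => ?_⟩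
    obtain ⟨i, hi, -⟩ := mem_betaSet.1 hx
    exact notMem_bot (i, 0) (mem_iff_lt_colLen.2 hi)
  | insert m s hlt ih =>
    obtain ⟨Y, rfl⟩ := ih fun h => hS (Finset.mem_insert_of_mem h)
    have hm : m ≠ 0 := fun h => hS (h ▸ Finset.mem_insert_self m _)
    -- the new top row, of length `m - Y.colLen 0`, is at least as long as the old one
    have hrow : Y.rowLen 0 + Y.colLen 0 ≤ m ∧ Y.colLen 0 < m := by
      rcases Nat.eq_zero_or_pos (Y.colLen 0) with h0 | hpos
      · have : ¬ 0 < Y.rowLen 0 := fun h => (lt_colLen_zero_iff.2 h).ne' h0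
        omega
      · have htop := hlt _ (mem_betaSet.2 ⟨0, hpos, rfl⟩)
        have := lt_colLen_zero_iff.1 hpos
        unfold betaNum at htop
        omega
    obtain ⟨Y', hY'⟩ := exists_betaSet_eq_insert Y (r := m - Y.colLen 0) (by omega) (by omega)
    exact ⟨Y', by rwa [Nat.sub_add_cancel hrow.2.le] at hY'⟩

theorem exists_distinctParts_isCore_betaSet_eq_iff (t u : ℕ) (S : Finset ℕ) :
    (∃ Y : YoungDiagram, DistinctParts Y ∧ IsCore Y t ∧ IsCore Y u ∧ betaSet Y = S) ↔
      0 ∉ S ∧ ClosedUnderSub t S ∧ ClosedUnderSub u S ∧ ∀ x ∈ S, x + 1 ∉ S := by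
  constructor
  · rintro ⟨Y, hD, ht, hu, rfl⟩
    exact ⟨zero_notMem_betaSet, (isCore_iff_closedUnderSub t).1 ht,
      (isCore_iff_closedUnderSub u).1 hu, distinctParts_iff.1 hD⟩
  · rintro ⟨h0, ht, hu, hcons⟩
    obtain ⟨Y, rfl⟩ := exists_betaSet_eq S h0
    exact ⟨Y, distinctParts_iff.2 hcons, (isCore_iff_closedUnderSub t).2 ht,
      (isCore_iff_closedUnderSub u).2 hu, rfl⟩

end YoungDiagram

section

variable {n d : ℕ} {S : Finset ℕ}

theorem exists_block_iff {x : ℕ} :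
    (∃ i j : ℕ, 1 ≤ i ∧ i ≤ d ∧ 1 ≤ j ∧ j ≤ n - 1 ∧ x = (i - 1) * n + j) ↔
      x < d * n ∧ ¬ n ∣ x := by
  constructor
  · rintro ⟨i, j, hi, hid, hj, hjn, rfl⟩
    obtain ⟨k, rfl⟩ := Nat.exists_eq_add_of_le' hi
    have hkd : (k + 1) * n ≤ d * n := Nat.mul_le_mul_right n hid
    rw [Nat.add_sub_cancel]
    refine ⟨by rw [add_mul] at hkd; omega, fun h => ?_⟩
    have := Nat.le_of_dvd (by omega) ((Nat.dvd_add_right (dvd_mul_left n k)).1 h)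
    omega
  · rintro ⟨hx, hndvd⟩
    have hn : 0 < n := Nat.pos_of_ne_zero fun h => by simp [h] at hx
    have hr : x % n ≠ 0 := fun h => hndvd (Nat.dvd_of_mod_eq_zero h)
    have := Nat.mod_lt x hn
    have hq : x / n + 1 ≤ d := (Nat.div_lt_iff_lt_mul hn).2 hx
    exact ⟨x / n + 1, x % n, Nat.le_add_left 1 _, hq, by omega, by omega, by simp [Nat.div_add_mod']⟩

theorem forall_lt_mul_and_not_dvd (h0 : 0 ∉ S) (hn : ClosedUnderSub n S)
    (hdn : ClosedUnderSub (d * n + 1) S) (hcons : ∀ x ∈ S, x + 1 ∉ S) :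
    ∀ x ∈ S, x < d * n ∧ ¬ n ∣ x := by
  intro x hx
  have hndvd : ¬ n ∣ x := by
    rintro ⟨m, rfl⟩
    have := hn.sub_mul_mem m hx (mul_comm m n).le
    rw [mul_comm, Nat.sub_self] at this
    exact h0 this
  refine ⟨not_le.1 fun hle => ?_, hndvd⟩
  have hne : x ≠ d * n := fun h => hndvd (h ▸ dvd_mul_left n d)
  have h1 := hdn x hx (by omega)
  have h2 := hn.sub_mul_mem d hx hle
  exact hcons _ h1 (by rwa [show x - (d * n + 1) + 1 = x - d * n by omega])

theorem closedUnderSub_iff (hS : ∀ x ∈ S, x < d * n ∧ ¬ n ∣ x) :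
    ClosedUnderSub n S ↔ ∀ i j : ℕ, 1 ≤ i → i ≤ d - 1 → 1 ≤ j → j ≤ n - 1 → i * n + j ∈ S →
      (i - 1) * n + j ∈ S := by
  constructor
  · intro h i j hi _ _ _ hmem
    obtain ⟨k, rfl⟩ := Nat.exists_eq_add_of_le' hi
    have := h _ hmem (by rw [add_mul]; omega)
    rwa [show (k + 1) * n + j - n = k * n + j by rw [add_mul]; omega] at this
  · intro h x hx hnx
    obtain ⟨hxd, hndvd⟩ := hS x hx
    have hn : 0 < n := Nat.pos_of_ne_zero fun h => by simp [h] at hxd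
    have hr : x % n ≠ 0 := fun h => hndvd (Nat.dvd_of_mod_eq_zero h)
    have hq : 1 ≤ x / n := Nat.div_pos hnx hn
    have := Nat.mod_lt x hn
    have := (Nat.div_lt_iff_lt_mul hn).2 hxd
    have := Nat.div_add_mod' x n
    have := Nat.le_mul_of_pos_left n hq
    have hmem := h (x / n) (x % n) hq (by omega) (by omega) (by omega) (by rwa [Nat.div_add_mod'])
    rwa [Nat.sub_one_mul, show x / n * n - n + x % n = x - n by omega] at hmem

theorem forall_add_one_notMem_iff (hS : ∀ x ∈ S, x < d * n ∧ ¬ n ∣ x)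
    (hn : ClosedUnderSub n S) :
    (∀ x ∈ S, x + 1 ∉ S) ↔ ∀ j : ℕ, 1 ≤ j → j ≤ n - 2 → j ∈ S → j + 1 ∉ S := by
  refine ⟨fun h j _ _ => h j, fun h x hx hx1 => ?_⟩
  have hn0 : 0 < n := Nat.pos_of_ne_zero fun h => by simp [h] at hS; exact hS x hx
  have hr : x % n ≠ 0 := fun h => (hS x hx).2 (Nat.dvd_of_mod_eq_zero h)
  have hqr := Nat.div_add_mod' x n
  have hr1 : x % n + 1 < n := by
    refine lt_of_le_of_ne (Nat.mod_lt x hn0) fun h => (hS _ hx1).2 ⟨x / n + 1, ?_⟩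
    rw [mul_add, mul_comm]
    omega
  -- subtracting `n` repeatedly takes `x` and `x + 1` to their residues
  have h1 := hn.sub_mul_mem (x / n) hx (by omega)
  have h2 := hn.sub_mul_mem (x / n) hx1 (by omega)
  rw [show x - x / n * n = x % n by omega] at h1
  rw [show x + 1 - x / n * n = x % n + 1 by omega] at h2
  exact h (x % n) (by omega) (by omega) h1 h2

theorem closedUnderSub_and_mul_add_one_iff (n d : ℕ) (S : Finset ℕ) :
    (0 ∉ S ∧ ClosedUnderSub n S ∧ ClosedUnderSub (d * n + 1) S ∧ ∀ x ∈ S, x + 1 ∉ S) ↔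
      ((∀ x ∈ S, ∃ i j : ℕ, 1 ≤ i ∧ i ≤ d ∧ 1 ≤ j ∧ j ≤ n - 1 ∧ x = (i - 1) * n + j) ∧
       (∀ i j : ℕ, 1 ≤ i → i ≤ d - 1 → 1 ≤ j → j ≤ n - 1 → i * n + j ∈ S →
          (i - 1) * n + j ∈ S) ∧
       (∀ j : ℕ, 1 ≤ j → j ≤ n - 2 → j ∈ S → j + 1 ∉ S)) := by
  simp only [exists_block_iff]
  constructor
  · rintro ⟨h0, hn, hdn, hcons⟩
    have hS := forall_lt_mul_and_not_dvd h0 hn hdn hcons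
    exact ⟨hS, (closedUnderSub_iff hS).1 hn, (forall_add_one_notMem_iff hS hn).1 hcons⟩
  · rintro ⟨hS, hsub, hres⟩
    have hn := (closedUnderSub_iff hS).2 hsub
    refine ⟨fun h0 => (hS 0 h0).2 (dvd_zero n), hn, fun x hx hle => ?_,
      (forall_add_one_notMem_iff hS hn).2 hres⟩
    have := (hS x hx).1
    omega

end

theorem stmt9_general (n d : ℕ) (S : Finset ℕ) :
    (∃ Y : YoungDiagram, DistinctParts Y ∧ IsCore Y n ∧ IsCore Y (d * n + 1) ∧
        betaSet Y = S) ↔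
      ((∀ x ∈ S, ∃ i j : ℕ, 1 ≤ i ∧ i ≤ d ∧ 1 ≤ j ∧ j ≤ n - 1 ∧ x = (i - 1) * n + j) ∧
       (∀ i j : ℕ, 1 ≤ i → i ≤ d - 1 → 1 ≤ j → j ≤ n - 1 → i * n + j ∈ S →
          (i - 1) * n + j ∈ S) ∧
       (∀ j : ℕ, 1 ≤ j → j ≤ n - 2 → j ∈ S → j + 1 ∉ S)) := by
  rw [YoungDiagram.exists_distinctParts_isCore_betaSet_eq_iff,
    closedUnderSub_and_mul_add_one_iff]

theorem stmt9 (n d : ℕ) (hn : 0 < n) (hd : 0 < d) (S : Finset ℕ) (hS : 0 ∉ S) :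
    (∃ Y : YoungDiagram, DistinctParts Y ∧ IsCore Y n ∧ IsCore Y (d * n + 1) ∧
        betaSet Y = S) ↔
      ((∀ x ∈ S, ∃ i j : ℕ, 1 ≤ i ∧ i ≤ d ∧ 1 ≤ j ∧ j ≤ n - 1 ∧ x = (i - 1) * n + j) ∧
       (∀ i j : ℕ, 1 ≤ i → i ≤ d - 1 → 1 ≤ j → j ≤ n - 1 → i * n + j ∈ S →
          (i - 1) * n + j ∈ S) ∧
       (∀ j : ℕ, 1 ≤ j → j ≤ n - 2 → j ∈ S → j + 1 ∉ S)) :=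
  stmt9_general n d S
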